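/- Let G be a countable group, A a finite alphabet, and F a set of patterns such that there exists β > 0 with |A| − Σ_{f∈F} |f|·β^{1−|f|} ≥ β. Then the subshift X_F of configurations G → A avoiding all patterns of F is nonempty. -/

import Mathlib

/-- A pattern over a group `G` with alphabet `A`: a finite support together with
a labeling of the group elements (only the values on the support matter). -/
structure Pattern (G A : Type*) where
  supp : Finset G
  val : G → A

/-- A pattern `f` appears in a configuration `x : G → A` if some translate of
its support carries the same letters. -/
def appearsIn {G A : Type*} [Group G] (f : Pattern G A) (x : G → A) : Prop :=
  ∃ g : G, ∀ s ∈ f.supp, x (g * s) = f.val s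

/-- The subshift `X_F`: configurations avoiding every forbidden pattern. -/
def shiftSpace {G A : Type*} [Group G] (F : Set (Pattern G A)) : Set (G → A) :=
  {x | ∀ f ∈ F, ¬ appearsIn f x}

/-- Globally admissible patterns of support `S`: those appearing in some
configuration of `X_F`. -/
def globallyAdmissible {G A : Type*} [Group G] (F : Set (Pattern G A)) (S : Finset G) :
    Set ({g // g ∈ S} → A) :=
  {q | ∃ x ∈ shiftSpace F, ∃ t : G, ∀ s : {g // g ∈ S}, x (t * s.1) = q s}

/-- `G_F^(n)`: the minimum over supports of size `n` of the number of globally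
admissible patterns with that support. -/
noncomputable def globalComplexity {G A : Type*} [Group G] (F : Set (Pattern G A)) (n : ℕ) : ℕ :=
  sInf {k | ∃ S : Finset G, S.card = n ∧ (globallyAdmissible F S).ncard = k}


/-!
Rosenfeld-style counting. Write `N S` for the number of locally admissible patterns on a finite
window `S`. Adding a site `g ∉ S` multiplies `N` by at least `β`: a pattern on `S` has `|A|`
extensions to `S ∪ {g}`, and an extension is lost only if some `f ∈ F` occurs with one of its
`|f|` sites at `g`. Such an extension is determined by its values off that occurrence, so there
are at most `N (S \ occurrence) ≤ β ^ (1 - |f|) * N S` of them, by induction on `|S|`. Summing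
over `f` and the site of `f` at `g`, `N (S ∪ {g}) ≥ (|A| - ∑ |f| β ^ (1 - |f|)) * N S ≥ β * N S`.
Hence every window carries a locally admissible pattern, and compactness of `A ^ G` produces a
configuration that is locally admissible on every window, i.e. a point of `X_F`.
-/

open Function

section Counting

theorem ncard_le_tsum_of_subset_iUnion {α ι : Type*} {B : Set α} (hB : B.Finite)
    {E : ι → Set α} (hcover : B ⊆ ⋃ i, E i) (hEfin : ∀ i, (E i).Finite) {w : ι → ℝ}
    (hw : Summable w) (hw0 : ∀ i, 0 ≤ w i) (hE : ∀ i, ((E i).ncard : ℝ) ≤ w i) :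
    (B.ncard : ℝ) ≤ ∑' i, w i := by
  classical
  have := hB.fintype
  choose idx hidx using fun b : B => Set.mem_iUnion.mp (hcover b.2)
  set I := Finset.univ.image idx
  have hBI : B ⊆ ⋃ i ∈ I, E i := fun b hb =>
    Set.mem_biUnion (Finset.mem_image_of_mem _ (Finset.mem_univ ⟨b, hb⟩)) (hidx ⟨b, hb⟩)
  calc (B.ncard : ℝ) ≤ ((⋃ i ∈ I, E i).ncard : ℝ) := by
        exact_mod_cast Set.ncard_le_ncard hBI (I.finite_toSet.biUnion fun i _ => hEfin i)
    _ ≤ ∑ i ∈ I, ((E i).ncard : ℝ) := by exact_mod_cast I.set_ncard_biUnion_le E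
    _ ≤ ∑ i ∈ I, w i := Finset.sum_le_sum fun i _ => hE i
    _ ≤ ∑' i, w i := hw.sum_le_tsum I fun i _ => hw0 i

theorem hasSum_sigma_finset_const {ι α : Type*} (s : ι → Finset α) {c : ι → ℝ}
    (hc : ∀ i, 0 ≤ c i) (hsum : Summable fun i => (s i).card * c i) :
    HasSum (fun p : Σ i, s i => c p.1) (∑' i, (s i).card * c i) := by
  have hfiber : ∀ i, ∑' _ : s i, c i = (s i).card * c i := fun i => by simp
  have hs : Summable fun p : Σ i, s i => c p.1 :=
    (summable_sigma_of_nonneg fun p => hc p.1).mpr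
      ⟨fun _ => .of_finite, by simpa only [hfiber] using hsum⟩
  convert hs.hasSum using 1
  rw [hs.tsum_sigma' fun _ => .of_finite]
  exact tsum_congr fun i => (hfiber i).symm

theorem pow_card_mul_le_union {α : Type*} [DecidableEq α] {N : Finset α → ℝ} {β : ℝ}
    (hβ : 0 ≤ β) {n : ℕ} (hstep : ∀ S : Finset α, S.card < n → ∀ a ∉ S, β * N S ≤ N (insert a S))
    {T D : Finset α} (hTD : Disjoint T D) (hcard : (T ∪ D).card ≤ n) :
    β ^ D.card * N T ≤ N (T ∪ D) := by
  induction D using Finset.induction_on with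
  | empty => simp
  | @insert d D hd ih =>
    rw [Finset.disjoint_insert_right] at hTD
    have hdTD : d ∉ T ∪ D := by simp [hTD.1, hd]
    rw [Finset.union_insert, Finset.card_insert_of_notMem hdTD] at hcard
    calc β ^ (insert d D).card * N T = β * (β ^ D.card * N T) := by
          rw [Finset.card_insert_of_notMem hd, pow_succ]; ring
      _ ≤ β * N (T ∪ D) := mul_le_mul_of_nonneg_left (ih hTD.2 (by omega)) hβ
      _ ≤ N (T ∪ insert d D) := by rw [Finset.union_insert]; exact hstep _ (by omega) d hdTD

theorem Set.finite_setOf_forall_notMem_eq {α β : Type*} [Finite β] (S : Finset α) (b : β) :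
    {x : α → β | ∀ a ∉ S, x a = b}.Finite := by
  refine Set.Finite.of_finite_image (f := fun x (s : S) => x s) (Set.toFinite _) ?_
  intro x hx y hy hxy
  funext a
  by_cases ha : a ∈ S
  · exact congrFun hxy ⟨a, ha⟩
  · rw [hx a ha, hy a ha]

theorem ncard_setOf_update_mem {α β : Type*} [DecidableEq α] (L : Set (α → β)) (a : α) (b : β)
    (hL : ∀ x ∈ L, x a = b) : {x | update x a b ∈ L}.ncard = Nat.card β * L.ncard := by
  have hfix : ∀ y ∈ L, update y a b = y := fun y hy => by rw [← hL y hy, update_eq_self]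
  let e : {x | update x a b ∈ L} ≃ β × L :=
    { toFun := fun x => (x.1 a, ⟨update x.1 a b, x.2⟩)
      invFun := fun p => ⟨update p.2.1 a p.1, by simp [update_idem, hfix _ p.2.2]⟩
      left_inv := fun x => Subtype.ext (by simp [update_idem])
      right_inv := fun p => by
        ext
        · simp
        · simp [update_idem, hfix _ p.2.2] }
  rw [← Nat.card_coe_set_eq, Nat.card_congr e, Nat.card_prod, Nat.card_coe_set_eq]

end Counting

section LocallyAdmissible

variable {G A : Type*} [Group G] {F : Set (Pattern G A)}

def IsLocallyAdmissible (F : Set (Pattern G A)) (S : Finset G) (x : G → A) : Prop :=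
  ∀ f ∈ F, ∀ t : G, (∀ s ∈ f.supp, t * s ∈ S) → ¬ ∀ s ∈ f.supp, x (t * s) = f.val s

theorem IsLocallyAdmissible.mono {S T : Finset G} {x : G → A} (h : IsLocallyAdmissible F T x)
    (hST : S ⊆ T) : IsLocallyAdmissible F S x :=
  fun f hf t ht => h f hf t fun s hs => hST (ht s hs)

theorem IsLocallyAdmissible.congr {S : Finset G} {x y : G → A} (h : IsLocallyAdmissible F S x)
    (hxy : Set.EqOn x y S) : IsLocallyAdmissible F S y := by
  intro f hf t ht hocc
  exact h f hf t ht fun s hs => (hxy (ht s hs)).trans (hocc s hs)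

theorem mem_shiftSpace_of_forall_isLocallyAdmissible {x : G → A}
    (h : ∀ S, IsLocallyAdmissible F S x) : x ∈ shiftSpace F := by
  classical
  rintro f hf ⟨t, hocc⟩
  exact h (f.supp.image (t * ·)) f hf t (fun s hs => Finset.mem_image_of_mem _ hs) hocc

theorem isClosed_setOf_isLocallyAdmissible [TopologicalSpace A] [DiscreteTopology A]
    (S : Finset G) : IsClosed {x : G → A | IsLocallyAdmissible F S x} := by
  let r : (G → A) → (S → A) := fun x s => x s
  have hpre : {x | IsLocallyAdmissible F S x} = r ⁻¹' (r '' {x | IsLocallyAdmissible F S x}) := by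
    refine (Set.subset_preimage_image _ _).antisymm ?_
    rintro x ⟨y, hy, hyx⟩
    exact hy.congr fun s hs => congrFun hyx ⟨s, hs⟩
  rw [hpre]
  exact (isClosed_discrete _).preimage (continuous_pi fun s => continuous_apply _)

theorem exists_occurrence_of_not_isLocallyAdmissible_insert [DecidableEq G] {S : Finset G}
    {g : G} {x : G → A} (hS : IsLocallyAdmissible F S x)
    (hgS : ¬ IsLocallyAdmissible F (insert g S) x) :
    ∃ f ∈ F, ∃ s₀ ∈ f.supp, (∀ s ∈ f.supp, g * s₀⁻¹ * s ∈ insert g S) ∧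
      ∀ s ∈ f.supp, x (g * s₀⁻¹ * s) = f.val s := by
  unfold IsLocallyAdmissible at hgS
  push Not at hgS
  obtain ⟨f, hf, t, hins, hocc⟩ := hgS
  obtain ⟨s₀, hs₀, rfl⟩ : ∃ s₀ ∈ f.supp, t * s₀ = g := by
    by_contra! hno
    exact hS f hf t (fun s hs => (Finset.mem_insert.mp (hins s hs)).resolve_left (hno s hs)) hocc
  exact ⟨f, hf, s₀, hs₀, by simpa only [mul_inv_cancel_right] using And.intro hins hocc⟩

/-- The locally admissible patterns with support `S` (the paper's `L_F^(S)`), each one encoded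
by its extension to `G` taking the constant value `a₀` off `S`. -/
def locallyAdmissible (F : Set (Pattern G A)) (a₀ : A) (S : Finset G) : Set (G → A) :=
  {x | IsLocallyAdmissible F S x ∧ ∀ h ∉ S, x h = a₀}

theorem locallyAdmissible_finite [Finite A] (a₀ : A) (S : Finset G) :
    (locallyAdmissible F a₀ S).Finite :=
  (Set.finite_setOf_forall_notMem_eq S a₀).subset fun _ hx => hx.2

theorem const_mem_locallyAdmissible_empty (hne : ∀ f ∈ F, f.supp.Nonempty) (a₀ : A) :
    (fun _ => a₀) ∈ locallyAdmissible F a₀ ∅ := by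
  refine ⟨fun f hf t ht _ => ?_, fun _ _ => rfl⟩
  obtain ⟨s, hs⟩ := hne f hf
  exact Finset.notMem_empty _ (ht s hs)

theorem update_mem_locallyAdmissible_iff [DecidableEq G] {a₀ : A} {S : Finset G} {g : G}
    (hg : g ∉ S) {x : G → A} :
    update x g a₀ ∈ locallyAdmissible F a₀ S ↔
      IsLocallyAdmissible F S x ∧ ∀ h ∉ insert g S, x h = a₀ := by
  have hagree : Set.EqOn (update x g a₀) x S := fun s hs =>
    update_of_ne (ne_of_mem_of_not_mem hs hg) _ _
  refine and_congr ⟨fun h => h.congr hagree, fun h => h.congr hagree.symm⟩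
    ⟨fun h k hk => ?_, fun h k hk => ?_⟩
  · rw [Finset.mem_insert, not_or] at hk
    simpa [update_of_ne hk.1] using h k hk.2
  · by_cases hkg : k = g
    · simp [hkg]
    · rw [update_of_ne hkg]
      exact h k (by simp [hkg, hk])

theorem ncard_le_ncard_locallyAdmissible_sdiff [DecidableEq G] [Finite A] {a₀ : A}
    {S D : Finset G} {E : Set (G → A)}
    (hES : ∀ x ∈ E, IsLocallyAdmissible F S x ∧ ∀ h ∉ S ∪ D, x h = a₀)
    (hED : ∀ x ∈ E, ∀ y ∈ E, Set.EqOn x y D) :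
    E.ncard ≤ (locallyAdmissible F a₀ (S \ D)).ncard := by
  -- overwriting `D` by `a₀` is injective on `E`, whose members agree on `D`
  refine Set.ncard_le_ncard_of_injOn (fun x => D.piecewise (fun _ => a₀) x) ?_ ?_
    (locallyAdmissible_finite a₀ _)
  · intro x hx
    obtain ⟨hLA, hdef⟩ := hES x hx
    refine ⟨(hLA.mono Finset.sdiff_subset).congr fun s hs => ?_, fun h hh => ?_⟩
    · exact (D.piecewise_eq_of_notMem _ _ (Finset.mem_sdiff.mp hs).2).symm
    · by_cases hD : h ∈ D
      · simp [hD]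
      · rw [D.piecewise_eq_of_notMem _ _ hD]
        exact hdef h (by simp_all)
  · intro x hx y hy hxy
    funext h
    by_cases hD : h ∈ D
    · exact hED x hx y hy hD
    · simpa [hD] using congrFun hxy h

end LocallyAdmissible

section Growth

variable {G A : Type*} [Group G] [DecidableEq G] [Fintype A] {F : Set (Pattern G A)} {a₀ : A}
  {β : ℝ}

theorem finite_setOf_update_mem_locallyAdmissible {S : Finset G} {g : G} (hg : g ∉ S) :
    {x | update x g a₀ ∈ locallyAdmissible F a₀ S}.Finite :=
  (Set.finite_setOf_forall_notMem_eq (insert g S) a₀).subset fun _ hx =>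
    ((update_mem_locallyAdmissible_iff hg).mp hx).2

theorem ncard_le_of_occurrence (hβ : 0 < β) {S : Finset G} {g : G} (hg : g ∉ S)
    (hstep : ∀ T : Finset G, T.card < S.card → ∀ a ∉ T,
      β * (locallyAdmissible F a₀ T).ncard ≤ (locallyAdmissible F a₀ (insert a T)).ncard)
    {f : Pattern G A} {s₀ : G} (hs₀ : s₀ ∈ f.supp)
    (hins : ∀ s ∈ f.supp, g * s₀⁻¹ * s ∈ insert g S) {E : Set (G → A)}
    (hE : ∀ x ∈ E, (IsLocallyAdmissible F S x ∧ ∀ h ∉ insert g S, x h = a₀) ∧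
      ∀ s ∈ f.supp, x (g * s₀⁻¹ * s) = f.val s) :
    (E.ncard : ℝ) ≤ β ^ (1 - (f.supp.card : ℤ)) * (locallyAdmissible F a₀ S).ncard := by
  set D := f.supp.image (g * s₀⁻¹ * ·)
  have hgD : g ∈ D := Finset.mem_image.mpr ⟨s₀, hs₀, inv_mul_cancel_right g s₀⟩
  have hDins : D ⊆ insert g S := Finset.image_subset_iff.mpr hins
  have hcardD : (S ∩ D).card + 1 = f.supp.card := by
    rw [← Finset.card_insert_of_notMem fun h => hg (Finset.mem_inter.mp h).1,
      ← Finset.insert_inter_of_mem hgD, Finset.inter_eq_right.mpr hDins,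
      Finset.card_image_of_injective _ (mul_right_injective _)]
  have hE_le : E.ncard ≤ (locallyAdmissible F a₀ (S \ D)).ncard := by
    refine ncard_le_ncard_locallyAdmissible_sdiff (fun x hx => ⟨(hE x hx).1.1, fun h hh => ?_⟩)
      fun x hx y hy h hh => ?_
    · refine (hE x hx).1.2 h fun hgS => hh ?_
      rcases Finset.mem_insert.mp hgS with rfl | hS
      exacts [Finset.mem_union_right _ hgD, Finset.mem_union_left _ hS]
    · obtain ⟨s, hs, rfl⟩ := Finset.mem_image.mp hh
      exact ((hE x hx).2 s hs).trans ((hE y hy).2 s hs).symm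
  have hchain : β ^ (S ∩ D).card * (locallyAdmissible F a₀ (S \ D)).ncard ≤
      (locallyAdmissible F a₀ S).ncard := by
    have := pow_card_mul_le_union (N := fun T => ((locallyAdmissible F a₀ T).ncard : ℝ)) hβ.le
      hstep (Finset.disjoint_sdiff_inter S D) (by rw [Finset.sdiff_union_inter])
    rwa [Finset.sdiff_union_inter] at this
  have hpow : β ^ (1 - (f.supp.card : ℤ)) = (β ^ (S ∩ D).card)⁻¹ := by
    rw [← hcardD, ← zpow_natCast, ← zpow_neg]
    push_cast
    ring_nf
  calc (E.ncard : ℝ) ≤ (locallyAdmissible F a₀ (S \ D)).ncard := by exact_mod_cast hE_le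
    _ ≤ β ^ (1 - (f.supp.card : ℤ)) * (locallyAdmissible F a₀ S).ncard := by
      rw [hpow]
      exact (le_inv_mul_iff₀ (pow_pos hβ _)).mpr hchain

theorem ncard_sdiff_locallyAdmissible_insert_le (hβ : 0 < β)
    (hsum : Summable fun f : F => (f.1.supp.card : ℝ) * β ^ (1 - (f.1.supp.card : ℤ)))
    {S : Finset G} {g : G} (hg : g ∉ S)
    (hstep : ∀ T : Finset G, T.card < S.card → ∀ a ∉ T,
      β * (locallyAdmissible F a₀ T).ncard ≤ (locallyAdmissible F a₀ (insert a T)).ncard) :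
    (({x | update x g a₀ ∈ locallyAdmissible F a₀ S} \
        locallyAdmissible F a₀ (insert g S)).ncard : ℝ) ≤
      (∑' f : F, (f.1.supp.card : ℝ) * β ^ (1 - (f.1.supp.card : ℤ))) *
        (locallyAdmissible F a₀ S).ncard := by
  set Q := {x | update x g a₀ ∈ locallyAdmissible F a₀ S}
  set NS : ℝ := ((locallyAdmissible F a₀ S).ncard : ℝ)
  -- `E ⟨f, s₀⟩`: the extensions in which `f` occurs with its site `s₀` placed at `g`
  let E : (Σ f : F, f.1.supp) → Set (G → A) := fun p =>
    {x | x ∈ Q ∧ (∀ s ∈ p.1.1.supp, g * (p.2 : G)⁻¹ * s ∈ insert g S) ∧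
      ∀ s ∈ p.1.1.supp, x (g * (p.2 : G)⁻¹ * s) = p.1.1.val s}
  have hc : ∀ f : F, 0 ≤ β ^ (1 - (f.1.supp.card : ℤ)) * NS := fun f =>
    mul_nonneg (zpow_pos hβ _).le (Nat.cast_nonneg _)
  have hw := hasSum_sigma_finset_const (fun f : F => f.1.supp) hc
    (by simpa only [mul_assoc] using hsum.mul_right NS)
  have hcover : Q \ locallyAdmissible F a₀ (insert g S) ⊆ ⋃ p, E p := by
    rintro x ⟨hxQ, hxL⟩
    have hx := (update_mem_locallyAdmissible_iff hg).mp hxQ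
    obtain ⟨f, hf, s₀, hs₀, hins, hocc⟩ :=
      exists_occurrence_of_not_isLocallyAdmissible_insert hx.1 fun h => hxL ⟨h, hx.2⟩
    exact Set.mem_iUnion.mpr ⟨⟨⟨f, hf⟩, ⟨s₀, hs₀⟩⟩, hxQ, hins, hocc⟩
  have hQfin : Q.Finite := finite_setOf_update_mem_locallyAdmissible hg
  have hE : ∀ p, ((E p).ncard : ℝ) ≤ β ^ (1 - (p.1.1.supp.card : ℤ)) * NS := by
    intro p
    rcases (E p).eq_empty_or_nonempty with hempty | ⟨x, -, hins, -⟩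
    · simpa [hempty] using hc p.1
    · exact ncard_le_of_occurrence hβ hg hstep p.2.2 hins fun y hy =>
        ⟨(update_mem_locallyAdmissible_iff hg).mp hy.1, hy.2.2⟩
  calc _ ≤ ∑' p : (Σ f : F, f.1.supp), β ^ (1 - (p.1.1.supp.card : ℤ)) * NS :=
        ncard_le_tsum_of_subset_iUnion (hQfin.subset Set.sdiff_subset) hcover
          (fun p => hQfin.subset fun _ hx => hx.1) hw.summable (fun p => hc p.1) hE
    _ = _ := by rw [hw.tsum_eq, ← tsum_mul_right]; simp only [mul_assoc]

theorem mul_ncard_le_ncard_insert_of_forall_card_lt (hβ : 0 < β)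
    (hsum : Summable fun f : F => (f.1.supp.card : ℝ) * β ^ (1 - (f.1.supp.card : ℤ)))
    (hcond : (Fintype.card A : ℝ) -
        ∑' f : F, (f.1.supp.card : ℝ) * β ^ (1 - (f.1.supp.card : ℤ)) ≥ β)
    {S : Finset G} {g : G} (hg : g ∉ S)
    (hstep : ∀ T : Finset G, T.card < S.card → ∀ a ∉ T,
      β * (locallyAdmissible F a₀ T).ncard ≤ (locallyAdmissible F a₀ (insert a T)).ncard) :
    β * (locallyAdmissible F a₀ S).ncard ≤ (locallyAdmissible F a₀ (insert g S)).ncard := by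
  set Q := {x | update x g a₀ ∈ locallyAdmissible F a₀ S}
  have hQ : (Q.ncard : ℝ) = Fintype.card A * (locallyAdmissible F a₀ S).ncard := by
    rw [ncard_setOf_update_mem _ g a₀ fun x hx => hx.2 g hg, Nat.card_eq_fintype_card]
    push_cast
    ring
  have hsub : locallyAdmissible F a₀ (insert g S) ⊆ Q := fun x hx =>
    (update_mem_locallyAdmissible_iff hg).mpr ⟨hx.1.mono (Finset.subset_insert g S), hx.2⟩
  have hsplit : ((Q \ locallyAdmissible F a₀ (insert g S)).ncard : ℝ) +
      (locallyAdmissible F a₀ (insert g S)).ncard = Q.ncard := by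
    exact_mod_cast Set.ncard_sdiff_add_ncard_of_subset hsub
      (finite_setOf_update_mem_locallyAdmissible hg)
  have hbad := ncard_sdiff_locallyAdmissible_insert_le hβ hsum hg hstep
  have hNS : (0 : ℝ) ≤ (locallyAdmissible F a₀ S).ncard := Nat.cast_nonneg _
  linarith [mul_le_mul_of_nonneg_right hcond hNS]

theorem mul_ncard_le_ncard_insert (hβ : 0 < β)
    (hsum : Summable fun f : F => (f.1.supp.card : ℝ) * β ^ (1 - (f.1.supp.card : ℤ)))
    (hcond : (Fintype.card A : ℝ) -
        ∑' f : F, (f.1.supp.card : ℝ) * β ^ (1 - (f.1.supp.card : ℤ)) ≥ β)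
    {S : Finset G} {g : G} (hg : g ∉ S) :
    β * (locallyAdmissible F a₀ S).ncard ≤ (locallyAdmissible F a₀ (insert g S)).ncard := by
  induction hn : S.card using Nat.strong_induction_on generalizing S g with
  | _ n ih =>
    exact mul_ncard_le_ncard_insert_of_forall_card_lt hβ hsum hcond hg
      fun T hT a ha => ih T.card (hn ▸ hT) ha rfl

theorem locallyAdmissible_nonempty (hne : ∀ f ∈ F, f.supp.Nonempty) (hβ : 0 < β)
    (hsum : Summable fun f : F => (f.1.supp.card : ℝ) * β ^ (1 - (f.1.supp.card : ℤ)))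
    (hcond : (Fintype.card A : ℝ) -
        ∑' f : F, (f.1.supp.card : ℝ) * β ^ (1 - (f.1.supp.card : ℤ)) ≥ β)
    (S : Finset G) : (locallyAdmissible F a₀ S).Nonempty := by
  suffices h : (0 : ℝ) < (locallyAdmissible F a₀ S).ncard from
    Set.nonempty_of_ncard_ne_zero (by exact_mod_cast h.ne')
  induction S using Finset.induction_on with
  | empty =>
    exact_mod_cast (Set.ncard_pos (locallyAdmissible_finite a₀ ∅)).mpr
      ⟨_, const_mem_locallyAdmissible_empty hne a₀⟩
  | insert g S hg ih => exact (mul_pos hβ ih).trans_le (mul_ncard_le_ncard_insert hβ hsum hcond hg)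

end Growth

theorem shiftSpace_nonempty_general {G A : Type*} [Group G] [Fintype A]
    (F : Set (Pattern G A)) (hne : ∀ f ∈ F, f.supp.Nonempty)
    (β : ℝ) (hβ : 0 < β)
    (hsum : Summable fun f : F => (f.1.supp.card : ℝ) * β ^ (1 - (f.1.supp.card : ℤ)))
    (hcond : (Fintype.card A : ℝ) -
        ∑' f : F, (f.1.supp.card : ℝ) * β ^ (1 - (f.1.supp.card : ℤ)) ≥ β) :
    (shiftSpace F).Nonempty := by
  classical
  have hA : 0 < Fintype.card A := by
    have : 0 ≤ ∑' f : F, (f.1.supp.card : ℝ) * β ^ (1 - (f.1.supp.card : ℤ)) :=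
      tsum_nonneg fun f => mul_nonneg (Nat.cast_nonneg _) (zpow_pos hβ _).le
    exact_mod_cast (by linarith : (0 : ℝ) < Fintype.card A)
  obtain ⟨a₀⟩ := Fintype.card_pos_iff.mp hA
  let _ : TopologicalSpace A := ⊥
  have : DiscreteTopology A := ⟨rfl⟩
  obtain ⟨x, hx⟩ := IsCompact.nonempty_iInter_of_directed_nonempty_isCompact_isClosed
    (fun S : Finset G => {x : G → A | IsLocallyAdmissible F S x})
    (Antitone.directed_ge fun _ _ hST _ hx => hx.mono hST)
    (fun S => (locallyAdmissible_nonempty hne hβ hsum hcond (a₀ := a₀) S).mono fun _ hx => hx.1)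
    (fun S => (isClosed_setOf_isLocallyAdmissible S).isCompact)
    isClosed_setOf_isLocallyAdmissible
  exact ⟨x, mem_shiftSpace_of_forall_isLocallyAdmissible (Set.mem_iInter.mp hx)⟩

/-- If there is `β > 0` with `|A| - ∑_{f∈F} |f|·β^{1-|f|} ≥ β`, then the subshift `X_F`
is nonempty. -/
theorem shiftSpace_nonempty {G A : Type*} [Group G] [Countable G] [Fintype A]
    (F : Set (Pattern G A)) (hne : ∀ f ∈ F, f.supp.Nonempty)
    (β : ℝ) (hβ : 0 < β)
    (hsum : Summable fun f : F => (f.1.supp.card : ℝ) * β ^ (1 - (f.1.supp.card : ℤ)))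
    (hcond : (Fintype.card A : ℝ) -
        ∑' f : F, (f.1.supp.card : ℝ) * β ^ (1 - (f.1.supp.card : ℤ)) ≥ β) :
    (shiftSpace F).Nonempty :=
  shiftSpace_nonempty_general F hne β hβ hsum hcond
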